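/- Fix $\alpha \in (0, 4]$, $e, f > 0$. For $y > 0$ sufficiently large (so that $x \mapsto x^{\alpha-1}(x^{\alpha}/2+f)^{-(e+1/\alpha+1)}$ is decreasing on $[y/2, \infty)$) and for $0 \le t \le y/2$, the function $S(t) = ((y-t)^{\alpha}/2 + f)^{-e-1/\alpha} - ((y+t)^{\alpha}/2 + f)^{-e-1/\alpha}$ satisfies $S(t) \le 4\alpha(e + 1/\alpha)\,((y/2)^{\alpha}/2 + f)^{-e-1/\alpha}\, \frac{t}{y}$. -/

import Mathlib

/-!
Write `q = e + 1/α`, `φ x = (x^α/2 + f)^(-q)` and `h x = x^(α-1) (x^α/2 + f)^(-q-1)`, so that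
`-φ' = (α q / 2) h`. On `[y - t, y + t] ⊆ [y/2, ∞)` the antitone `h` is at most `h (y/2)`, so the
mean value theorem gives `S(t) = φ (y - t) - φ (y + t) ≤ α q h(y/2) t`. Finally
`h (y/2) ≤ (4/y) ((y/2)^α/2 + f)^(-q)`, since `(y/2)^α ≤ 2 ((y/2)^α/2 + f)`.
-/

open Real Set

theorem hasDerivAt_rpow_half_add_rpow (α f p : ℝ) {x : ℝ} (hx : 0 < x) (hf : 0 ≤ f) :
    HasDerivAt (fun x : ℝ => (x ^ α / 2 + f) ^ p)
      (α * x ^ (α - 1) / 2 * p * (x ^ α / 2 + f) ^ (p - 1)) x :=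
  (((hasDerivAt_rpow_const (Or.inl hx.ne')).div_const 2).add_const f).rpow_const
    (Or.inl (by positivity))

theorem rpow_sub_one_mul_half_rpow_add_rpow_sub_one_le (α f p : ℝ) {z : ℝ} (hz : 0 < z)
    (hf : 0 ≤ f) :
    z ^ (α - 1) * (z ^ α / 2 + f) ^ (p - 1) ≤ 2 / z * (z ^ α / 2 + f) ^ p := by
  have hA : 0 < z ^ α / 2 + f := by positivity
  rw [rpow_sub_one hz.ne', rpow_sub_one hA.ne']
  calc z ^ α / z * ((z ^ α / 2 + f) ^ p / (z ^ α / 2 + f))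
      = z ^ α / (z ^ α / 2 + f) * ((z ^ α / 2 + f) ^ p / z) := by ring
    _ ≤ 2 * ((z ^ α / 2 + f) ^ p / z) := by
      gcongr
      rw [div_le_iff₀ hA]
      linarith
    _ = 2 / z * (z ^ α / 2 + f) ^ p := by ring

theorem S_upper_bound_general (α e f y t : ℝ) (hα : 0 < α) (he : 0 < e) (hf : 0 < f)
    (hy : 0 < y)
    (hmono : AntitoneOn (fun x : ℝ => x ^ (α - 1) * (x ^ α / 2 + f) ^ (-(e + 1/α + 1)))
      (Set.Ici (y/2)))
    (ht0 : 0 ≤ t) (ht : t ≤ y/2) :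
    ((y - t) ^ α / 2 + f) ^ (-e - 1/α) - ((y + t) ^ α / 2 + f) ^ (-e - 1/α)
      ≤ 4 * α * (e + 1/α) * ((y/2) ^ α / 2 + f) ^ (-e - 1/α) * (t/y) := by
  set q := e + 1 / α
  have hαq : 0 ≤ α * q := by
    rw [mul_add, mul_one_div_cancel hα.ne']
    positivity
  have hz : 0 < y / 2 := by positivity
  rw [show -e - 1 / α = -q by ring]
  rw [show -(q + 1) = -q - 1 by ring] at hmono
  set M := (y / 2) ^ (α - 1) * ((y / 2) ^ α / 2 + f) ^ (-q - 1)
  have hφ : ∀ x ∈ Ici (y / 2), HasDerivAt (fun x : ℝ => (x ^ α / 2 + f) ^ (-q))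
      (α * x ^ (α - 1) / 2 * -q * (x ^ α / 2 + f) ^ (-q - 1)) x := fun x hx =>
    hasDerivAt_rpow_half_add_rpow α f (-q) (hz.trans_le hx) hf.le
  have hderiv : ∀ x ∈ interior (Ici (y / 2)),
      -(α * q / 2 * M) ≤ deriv (fun x : ℝ => (x ^ α / 2 + f) ^ (-q)) x := by
    rw [interior_Ici]
    intro x hx
    rw [(hφ x (mem_Ici.2 hx.le)).deriv]
    have hhx := hmono self_mem_Ici (mem_Ici.2 hx.le) hx.le
    have hcoef : 0 ≤ α * q / 2 := by positivity
    nlinarith [mul_le_mul_of_nonneg_left hhx hcoef]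
  have hmvt := (convex_Ici (y / 2)).mul_sub_le_image_sub_of_le_deriv
    (fun x hx => (hφ x hx).continuousAt.continuousWithinAt)
    (fun x hx => (hφ x (interior_subset hx)).differentiableAt.differentiableWithinAt)
    hderiv (y - t) (mem_Ici.2 (by linarith)) (y + t) (mem_Ici.2 (by linarith)) (by linarith)
  have hM := rpow_sub_one_mul_half_rpow_add_rpow_sub_one_le α f (-q) hz hf.le
  calc _ ≤ α * q / 2 * M * (2 * t) := by linarith
    _ ≤ α * q / 2 * (2 / (y / 2) * ((y / 2) ^ α / 2 + f) ^ (-q)) * (2 * t) := by gcongr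
    _ = _ := by field_simp; ring

theorem S_upper_bound (α e f y t : ℝ) (hα : 0 < α) (hα4 : α ≤ 4) (he : 0 < e) (hf : 0 < f)
    (hy : 0 < y)
    (hmono : AntitoneOn (fun x : ℝ => x ^ (α - 1) * (x ^ α / 2 + f) ^ (-(e + 1/α + 1)))
      (Set.Ici (y/2)))
    (ht0 : 0 ≤ t) (ht : t ≤ y/2) :
    ((y - t) ^ α / 2 + f) ^ (-e - 1/α) - ((y + t) ^ α / 2 + f) ^ (-e - 1/α)
      ≤ 4 * α * (e + 1/α) * ((y/2) ^ α / 2 + f) ^ (-e - 1/α) * (t/y) :=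
  S_upper_bound_general α e f y t hα he hf hy hmono ht0 ht
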